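/- For every u ∈ D*: (i) the function x ↦ u(x) − c_u·sign(x)·(x²+1)^{−1/2} is Lebesgue integrable over ℝ, so Γ₁u is well defined; (ii) |Γ₂u| = |c_u| ≤ ‖A*u‖ + ‖u‖ + ‖u‖·‖ψ‖·‖φ‖ (norms in L²(ℝ)); (iii) there is a constant C > 0, independent of u, such that |Γ₁u| ≤ C(‖A*u‖ + ‖u‖). Hence Γ₁ and Γ₂ are bounded with respect to the graph norm of A*. -/

import Mathlib

open MeasureTheory Filter

/-- The (paper-convention) `L²(ℝ)` inner product `⟨f,g⟩ = ∫ f · conj g`,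
linear in the first argument. -/
noncomputable def ip (f g : ℝ → ℂ) : ℂ :=
  ∫ x : ℝ, f x * (starRingEnd ℂ) (g x)

/-- The boundary operator `Γ₁`, evaluated on `g ∈ D*` with associated constant `c = c_g`:
`Γ₁ g = ∫_ℝ ( g(x) − c·sign(x)·(x²+1)^{−1/2} ) dx`. -/
noncomputable def Gam1 (g : ℝ → ℂ) (c : ℂ) : ℂ :=
  ∫ x : ℝ, (g x - c * ((Real.sign x : ℝ) : ℂ) * (((Real.sqrt (x ^ 2 + 1) : ℝ) : ℂ))⁻¹)

/-- The `L²(ℝ)` norm of a function. -/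
noncomputable def l2 (f : ℝ → ℂ) : ℝ := (eLpNorm f 2 (volume : Measure ℝ)).toReal

/-!
With `ρ x = (1 + x²)⁻¹` and `w x = x / (1 + x²)` one has `ρ + x w = 1`, hence, for the profile
`s x = sign x / √(x² + 1)`, the identity `u − c s = ρ u + w (x u − c) + c (w − s)`.
Both `ρ` and `w` lie in `L²`, and `|w − s| ≤ ρ` because `|x − sign x · √(x² + 1)| ≤ 1`, so all three
terms are integrable and Cauchy–Schwarz bounds `Γ₁ u` by `‖u‖`, `‖x u − c‖` and `|c|`.
On `[0, 1]` the constant `c = x u − (x u − c)` is pointwise at most `|u| + |x u − c|`, which bounds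
`|c|`; finally `x u − c = A* u − ⟨u, ψ⟩ φ` bounds `‖x u − c‖` by `‖A* u‖ + ‖u‖ ‖ψ‖ ‖φ‖`.
-/

open Set

theorem norm_integral_mul_conj_le {α 𝕜 : Type*} [MeasurableSpace α] {μ : Measure α} [RCLike 𝕜]
    {f g : α → 𝕜} (hf : MemLp f 2 μ) (hg : MemLp g 2 μ) :
    ‖∫ x, f x * (starRingEnd 𝕜) (g x) ∂μ‖
      ≤ (eLpNorm f 2 μ).toReal * (eLpNorm g 2 μ).toReal := by
  have hinner : inner 𝕜 (hg.toLp g) (hf.toLp f) = ∫ x, f x * (starRingEnd 𝕜) (g x) ∂μ := by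
    rw [L2.inner_def]
    refine integral_congr_ae ?_
    filter_upwards [hg.coeFn_toLp, hf.coeFn_toLp] with x hgx hfx
    rw [RCLike.inner_apply', hgx, hfx, mul_comm]
  rw [← hinner, ← Lp.norm_toLp f hf, ← Lp.norm_toLp g hg, mul_comm]
  exact norm_inner_le_norm _ _

theorem l2_nonneg (f : ℝ → ℂ) : 0 ≤ l2 f := ENNReal.toReal_nonneg

theorem norm_ip_le {f g : ℝ → ℂ} (hf : MemLp f 2 volume) (hg : MemLp g 2 volume) :
    ‖ip f g‖ ≤ l2 f * l2 g :=
  norm_integral_mul_conj_le hf hg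

theorem norm_integral_mul_ofReal_le {f : ℝ → ℂ} {g : ℝ → ℝ} (hf : MemLp f 2 volume)
    (hg : MemLp g 2 volume) : ‖∫ x, f x * g x‖ ≤ l2 f * l2 (fun x => (g x : ℂ)) := by
  have h := norm_ip_le hf (hg.ofReal (K := ℂ))
  simp only [ip, RCLike.conj_ofReal] at h
  exact h

theorem l2_le_l2_add_const_mul {v φ : ℝ → ℂ} (k : ℂ) (hv : MemLp v 2 volume)
    (hφ : MemLp φ 2 volume) : l2 v ≤ l2 (fun x => v x + k * φ x) + ‖k‖ * l2 φ := by
  have hkφ : MemLp (k • φ) 2 volume := hφ.const_smul k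
  have hsum : MemLp (v + k • φ) 2 volume := hv.add hkφ
  calc l2 v = ‖hsum.toLp _ - hkφ.toLp _‖ := by
        rw [← MemLp.toLp_sub, Lp.norm_toLp, add_sub_cancel_right, l2]
    _ ≤ ‖hsum.toLp _‖ + ‖hkφ.toLp _‖ := norm_sub_le _ _
    _ = l2 (fun x => v x + k * φ x) + ‖k‖ * l2 φ := by
        rw [Lp.norm_toLp, MemLp.toLp_const_smul k hφ, norm_smul, Lp.norm_toLp]; rfl

theorem norm_le_l2_add_l2 {f g : ℝ → ℂ} {c : ℂ} (hf : MemLp f 2 volume)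
    (hg : MemLp g 2 volume) (h : ∀ x ∈ Icc (0 : ℝ) 1, ‖c‖ ≤ ‖f x‖ + ‖g x‖) :
    ‖c‖ ≤ l2 f + l2 g := by
  have hind : eLpNorm ((Icc (0 : ℝ) 1).indicator fun _ => c) 2 volume = ‖c‖ₑ := by
    simp [eLpNorm_indicator_const measurableSet_Icc two_ne_zero ENNReal.ofNat_ne_top]
  have hle : eLpNorm ((Icc (0 : ℝ) 1).indicator fun _ => c) 2 volume
      ≤ eLpNorm f 2 volume + eLpNorm g 2 volume :=
    calc _ ≤ eLpNorm (fun x => ‖f x‖ + ‖g x‖) 2 volume := by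
          refine eLpNorm_mono fun x => ?_
          by_cases hx : x ∈ Icc (0 : ℝ) 1
          · simpa [hx, abs_of_nonneg (by positivity : 0 ≤ ‖f x‖ + ‖g x‖)] using h x hx
          · simp [hx]
      _ ≤ eLpNorm (fun x => ‖f x‖) 2 volume + eLpNorm (fun x => ‖g x‖) 2 volume :=
          eLpNorm_add_le hf.norm.1 hg.norm.1 one_le_two
      _ = _ := by rw [eLpNorm_norm, eLpNorm_norm]
  rw [hind] at hle
  have := ENNReal.toReal_mono (ENNReal.add_ne_top.2 ⟨hf.2.ne, hg.2.ne⟩) hle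
  rwa [toReal_enorm, ENNReal.toReal_add hf.2.ne hg.2.ne] at this

theorem Real.measurable_sign : Measurable Real.sign :=
  Measurable.ite measurableSet_Iio measurable_const
    (Measurable.ite measurableSet_Ioi measurable_const measurable_const)

theorem abs_sub_sign_mul_sqrt_le_one (x : ℝ) : |x - Real.sign x * √(x ^ 2 + 1)| ≤ 1 := by
  have hsq : √(x ^ 2 + 1) ^ 2 = x ^ 2 + 1 := Real.sq_sqrt (by positivity)
  have hge : |x| ≤ √(x ^ 2 + 1) := Real.abs_le_sqrt (by linarith)
  rcases lt_trichotomy x 0 with hx | rfl | hx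
  · rw [Real.sign_of_neg hx, abs_le]
    rw [abs_of_neg hx] at hge
    constructor <;> nlinarith
  · simp
  · rw [Real.sign_of_pos hx, abs_le]
    rw [abs_of_pos hx] at hge
    constructor <;> nlinarith

noncomputable def signProfile (x : ℝ) : ℝ := Real.sign x * (√(x ^ 2 + 1))⁻¹

theorem measurable_signProfile : Measurable signProfile :=
  Real.measurable_sign.mul (by fun_prop)

theorem abs_div_one_add_sq_sub_signProfile_le (x : ℝ) :
    |x / (1 + x ^ 2) - signProfile x| ≤ (1 + x ^ 2)⁻¹ := by
  have hpos : 0 < 1 + x ^ 2 := by positivity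
  have hsqrt : (√(x ^ 2 + 1))⁻¹ = √(x ^ 2 + 1) / (1 + x ^ 2) := by
    rw [add_comm 1 (x ^ 2), Real.sqrt_div_self', one_div]
  rw [signProfile, hsqrt, mul_div_assoc', ← sub_div, abs_div, abs_of_pos hpos, div_eq_mul_inv]
  exact mul_le_of_le_one_left (by positivity) (abs_sub_sign_mul_sqrt_le_one x)

theorem integrable_div_one_add_sq_sub_signProfile :
    Integrable fun x : ℝ => x / (1 + x ^ 2) - signProfile x :=
  integrable_inv_one_add_sq.mono'
    (((by fun_prop : Measurable fun x : ℝ => x / (1 + x ^ 2)).sub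
      measurable_signProfile).aestronglyMeasurable) <|
    .of_forall fun x => abs_div_one_add_sq_sub_signProfile_le x

theorem memLp_two_of_sq_le_inv_one_add_sq {g : ℝ → ℝ} (hg : Measurable g)
    (h : ∀ x, g x ^ 2 ≤ (1 + x ^ 2)⁻¹) : MemLp g 2 volume := by
  rw [memLp_two_iff_integrable_sq_norm hg.aestronglyMeasurable]
  refine integrable_inv_one_add_sq.mono' (by fun_prop) (.of_forall fun x => ?_)
  simpa [Real.norm_eq_abs, sq_abs] using h x

theorem memLp_inv_one_add_sq : MemLp (fun x : ℝ => (1 + x ^ 2)⁻¹) 2 volume :=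
  memLp_two_of_sq_le_inv_one_add_sq (by fun_prop) fun x => by
    rw [sq]
    exact mul_le_of_le_one_left (by positivity) (inv_le_one_of_one_le₀ (by nlinarith))

theorem memLp_div_one_add_sq : MemLp (fun x : ℝ => x / (1 + x ^ 2)) 2 volume :=
  memLp_two_of_sq_le_inv_one_add_sq (by fun_prop) fun x => by
    rw [div_pow, div_le_iff₀ (by positivity), sq (1 + x ^ 2), ← mul_assoc,
      inv_mul_cancel₀ (by positivity)]
    linarith

theorem sub_mul_signProfile_eq (u c : ℂ) (x : ℝ) :
    u - c * signProfile x = u * ((1 + x ^ 2)⁻¹ : ℝ) + (x * u - c) * (x / (1 + x ^ 2) : ℝ)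
      + c * (x / (1 + x ^ 2) - signProfile x : ℝ) := by
  have h : (1 + (x : ℂ) ^ 2) ≠ 0 := by exact_mod_cast (by positivity : (1 + x ^ 2) ≠ 0)
  push_cast
  field_simp
  ring

theorem integrable_sub_mul_signProfile {u : ℝ → ℂ} {c : ℂ} (hu : MemLp u 2 volume)
    (hv : MemLp (fun x : ℝ => (x : ℂ) * u x - c) 2 volume) :
    Integrable fun x => u x - c * signProfile x := by
  simp_rw [sub_mul_signProfile_eq]
  refine ((hu.integrable_mul memLp_inv_one_add_sq.ofReal).add
    (hv.integrable_mul memLp_div_one_add_sq.ofReal)).add ?_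
  exact integrable_div_one_add_sq_sub_signProfile.ofReal.const_mul c

theorem exists_bound_norm_integral_sub_mul_signProfile : ∃ A > 0, ∀ (u : ℝ → ℂ) (c : ℂ),
    MemLp u 2 volume → MemLp (fun x : ℝ => (x : ℂ) * u x - c) 2 volume →
      ‖∫ x, u x - c * signProfile x‖
        ≤ A * (l2 u + l2 (fun x : ℝ => (x : ℂ) * u x - c) + ‖c‖) := by
  set a := l2 fun x : ℝ => (((1 + x ^ 2)⁻¹ : ℝ) : ℂ)
  set b := l2 fun x : ℝ => ((x / (1 + x ^ 2) : ℝ) : ℂ)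
  set K := ‖∫ x : ℝ, ((x / (1 + x ^ 2) - signProfile x : ℝ) : ℂ)‖
  have ha : 0 ≤ a := l2_nonneg _
  have hb : 0 ≤ b := l2_nonneg _
  have hK : 0 ≤ K := norm_nonneg _
  refine ⟨a + b + K + 1, by positivity, fun u c hu hv => ?_⟩
  set v := fun x : ℝ => (x : ℂ) * u x - c
  have hu' := l2_nonneg u
  have hv' := l2_nonneg v
  have hρ : Integrable fun x : ℝ => u x * (((1 + x ^ 2)⁻¹ : ℝ) : ℂ) :=
    hu.integrable_mul memLp_inv_one_add_sq.ofReal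
  have hw : Integrable fun x : ℝ => ((x : ℂ) * u x - c) * ((x / (1 + x ^ 2) : ℝ) : ℂ) :=
    hv.integrable_mul memLp_div_one_add_sq.ofReal
  have hr : Integrable fun x : ℝ => c * ((x / (1 + x ^ 2) - signProfile x : ℝ) : ℂ) :=
    integrable_div_one_add_sq_sub_signProfile.ofReal.const_mul c
  simp_rw [sub_mul_signProfile_eq]
  rw [integral_add (by exact hρ.add hw) hr, integral_add hρ hw, integral_const_mul]
  have hρ_le := norm_integral_mul_ofReal_le hu memLp_inv_one_add_sq
  have hw_le := norm_integral_mul_ofReal_le hv memLp_div_one_add_sq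
  calc _ ≤ l2 u * a + l2 v * b + ‖c‖ * K := by
        refine (norm_add₃_le ..).trans ?_
        rw [norm_mul]
        gcongr
    _ ≤ _ := by nlinarith [norm_nonneg c]

theorem norm_le_l2_mul_sub_add_l2 {u : ℝ → ℂ} {c : ℂ} (hu : MemLp u 2 volume)
    (hv : MemLp (fun x : ℝ => (x : ℂ) * u x - c) 2 volume) :
    ‖c‖ ≤ l2 (fun x : ℝ => (x : ℂ) * u x - c) + l2 u :=
  norm_le_l2_add_l2 hv hu fun x hx => by
    have hx1 : ‖(x : ℂ)‖ ≤ 1 := by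
      rw [Complex.norm_real, Real.norm_eq_abs, abs_le]
      exact ⟨by linarith [hx.1], hx.2⟩
    calc ‖c‖ = ‖x * u x - (x * u x - c)‖ := by rw [sub_sub_cancel]
      _ ≤ ‖(x : ℂ) * u x‖ + ‖x * u x - c‖ := norm_sub_le _ _
      _ ≤ ‖x * u x - c‖ + ‖u x‖ := by
        rw [norm_mul, add_comm]
        gcongr
        exact mul_le_of_le_one_left (norm_nonneg _) hx1

theorem l2_le_l2_add_ip_mul {v u φ ψ : ℝ → ℂ} (hv : MemLp v 2 volume) (hu : MemLp u 2 volume)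
    (hφ : MemLp φ 2 volume) (hψ : MemLp ψ 2 volume) :
    l2 v ≤ l2 (fun x => v x + ip u ψ * φ x) + l2 u * l2 ψ * l2 φ :=
  (l2_le_l2_add_const_mul _ hv hφ).trans <| by
    gcongr
    · exact l2_nonneg φ
    · exact norm_ip_le hu hψ

theorem sub_mul_sign_mul_inv_sqrt_eq (u c : ℂ) (x : ℝ) :
    u - c * (Real.sign x : ℂ) * ((√(x ^ 2 + 1) : ℝ) : ℂ)⁻¹ = u - c * signProfile x := by
  simp only [signProfile, Complex.ofReal_mul, Complex.ofReal_inv, mul_assoc]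

theorem stmt14 (φ ψ : ℝ → ℂ)
    (hφ : MemLp φ 2 (volume : Measure ℝ)) (hψ : MemLp ψ 2 (volume : Measure ℝ)) :
    (∀ (u : ℝ → ℂ) (c : ℂ), MemLp u 2 (volume : Measure ℝ) →
      MemLp (fun x : ℝ => (x : ℂ) * u x - c) 2 (volume : Measure ℝ) →
        -- (i) the integrand of `Γ₁ u` is integrable, so `Γ₁ u` is well defined
        (Integrable (fun x : ℝ =>
            u x - c * ((Real.sign x : ℝ) : ℂ) * (((Real.sqrt (x ^ 2 + 1) : ℝ) : ℂ))⁻¹)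
          (volume : Measure ℝ)) ∧
        -- (ii) `|Γ₂ u| = |c_u| ≤ ‖A*u‖ + ‖u‖ + ‖u‖·‖ψ‖·‖φ‖`
        ‖c‖ ≤ l2 (fun x : ℝ => ((x : ℂ) * u x - c) + ip u ψ * φ x) + l2 u +
            l2 u * l2 ψ * l2 φ) ∧
    -- (iii) `|Γ₁ u| ≤ C (‖A*u‖ + ‖u‖)` with `C` independent of `u`
    (∃ C : ℝ, 0 < C ∧
      ∀ (u : ℝ → ℂ) (c : ℂ), MemLp u 2 (volume : Measure ℝ) →
        MemLp (fun x : ℝ => (x : ℂ) * u x - c) 2 (volume : Measure ℝ) →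
          ‖Gam1 u c‖ ≤
            C * (l2 (fun x : ℝ => ((x : ℂ) * u x - c) + ip u ψ * φ x) + l2 u)) := by
  simp_rw [Gam1, sub_mul_sign_mul_inv_sqrt_eq]
  refine ⟨fun u c hu hv => ⟨integrable_sub_mul_signProfile hu hv, ?_⟩, ?_⟩
  · linarith [norm_le_l2_mul_sub_add_l2 hu hv, l2_le_l2_add_ip_mul hv hu hφ hψ]
  obtain ⟨A, hA, hbound⟩ := exists_bound_norm_integral_sub_mul_signProfile
  have hM : 0 ≤ l2 ψ * l2 φ := mul_nonneg (l2_nonneg ψ) (l2_nonneg φ)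
  refine ⟨2 * A * (1 + l2 ψ * l2 φ), by positivity, fun u c hu hv => ?_⟩
  have hc := norm_le_l2_mul_sub_add_l2 hu hv
  have hv_le := l2_le_l2_add_ip_mul hv hu hφ hψ
  have hu0 := l2_nonneg u
  have hw0 := l2_nonneg fun x : ℝ => ((x : ℂ) * u x - c) + ip u ψ * φ x
  calc _ ≤ A * (l2 u + l2 (fun x : ℝ => (x : ℂ) * u x - c) + ‖c‖) := hbound u c hu hv
    _ ≤ A * (2 * (1 + l2 ψ * l2 φ) * (l2 (fun x : ℝ => ((x : ℂ) * u x - c) + ip u ψ * φ x)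
          + l2 u)) := by
      gcongr
      nlinarith
    _ = _ := by ring
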